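/- arXiv:1205.1166 — 2 statements merged into one kernel-verified Lean document; each statement's English description precedes it below -/
import Mathlib

section
/- Under assumptions (A5) and (A7), if x : ℝ → ℝ^m and u : ℝ → ℝ^m are bounded continuous functions with ‖x(t) − u(t)‖ → 0 as t → −∞, and y, ỹ are the corresponding unique bounded solutions of y' = Ay + g(x(t), y) and ỹ' = Aỹ + g(u(t), ỹ), then ‖y(t) − ỹ(t)‖ → 0 as t → −∞. Moreover for all sufficiently negative t one has the explicit bound sup_{t ≤ R} ‖y(t) − ỹ(t)‖ ≤ (N L₂ β ε)/(ω − N L₃) whenever ‖x(t) − u(t)‖ < βε on (−∞, R]. -/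
open MeasureTheory Set Filter

abbrev Eu (k : ℕ) := EuclideanSpace ℝ (Fin k)

noncomputable def eAt {n : ℕ} (A : Matrix (Fin n) (Fin n) ℝ) (t : ℝ) :
    Eu n →L[ℝ] Eu n :=
  Matrix.toEuclideanCLM (𝕜 := ℝ) (NormedSpace.exp (t • A))

noncomputable def mulA {n : ℕ} (A : Matrix (Fin n) (Fin n) ℝ) : Eu n →L[ℝ] Eu n :=
  Matrix.toEuclideanCLM (𝕜 := ℝ) A

/-!
By the variation-of-constants formula, `y - ỹ` is the convolution of the kernel `e^{At}` with
the difference of the forcing terms, which is at most `L₂ C + L₃ D` on `(-∞, R]` when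
`‖x - u‖ ≤ C` there and `D = sup_{t ≤ R} ‖y t - ỹ t‖`. Integrating the kernel bound `N e^{-ωτ}`
gives `D ≤ N (L₂ C + L₃ D) / ω`, which, as `N L₃ < ω`, solves to `D ≤ N L₂ C / (ω - N L₃)`;
letting `C → 0` as `R → -∞` gives the convergence.
-/

open Topology

lemma exp_neg_mul_sub (ω t s : ℝ) :
    Real.exp (-ω * (t - s)) = Real.exp (-ω * t) * Real.exp (ω * s) := by
  rw [← Real.exp_add]; ring_nf

lemma integrableOn_exp_neg_mul_sub_Iic {ω : ℝ} (hω : 0 < ω) (t : ℝ) :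
    IntegrableOn (fun s => Real.exp (-ω * (t - s))) (Iic t) := by
  simp_rw [exp_neg_mul_sub]
  exact (integrableOn_exp_mul_Iic hω t).const_mul _

lemma integral_exp_neg_mul_sub_Iic {ω : ℝ} (hω : 0 < ω) (t : ℝ) :
    ∫ s in Iic t, Real.exp (-ω * (t - s)) = ω⁻¹ := by
  simp_rw [exp_neg_mul_sub]
  rw [integral_const_mul, integral_exp_mul_Iic hω, mul_div_assoc', ← Real.exp_add]
  simp

section DecayingKernel

variable {E F : Type*} [NormedAddCommGroup E] [NormedSpace ℝ E]
  [NormedAddCommGroup F] [NormedSpace ℝ F] {T : ℝ → E →L[ℝ] F} {N ω : ℝ}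

lemma norm_kernel_apply_le (hT : ∀ τ, 0 ≤ τ → ‖T τ‖ ≤ N * Real.exp (-ω * τ)) {s t K : ℝ}
    (hst : s ≤ t) {v : E} (hv : ‖v‖ ≤ K) :
    ‖T (t - s) v‖ ≤ N * K * Real.exp (-ω * (t - s)) := by
  have hTst := hT (t - s) (sub_nonneg.2 hst)
  calc ‖T (t - s) v‖ ≤ ‖T (t - s)‖ * ‖v‖ := (T (t - s)).le_opNorm v
    _ ≤ N * Real.exp (-ω * (t - s)) * K :=
        mul_le_mul hTst hv (norm_nonneg v) ((norm_nonneg _).trans hTst)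
    _ = N * K * Real.exp (-ω * (t - s)) := by ring

lemma integrableOn_Iic_kernel_apply (hω : 0 < ω)
    (hT : ∀ τ, 0 ≤ τ → ‖T τ‖ ≤ N * Real.exp (-ω * τ)) (hTc : Continuous T) {f : ℝ → E}
    (hf : Continuous f) {M : ℝ} (hfM : ∀ s, ‖f s‖ ≤ M) (t : ℝ) :
    IntegrableOn (fun s => T (t - s) (f s)) (Iic t) := by
  have hcont : Continuous fun s => T (t - s) (f s) :=
    (hTc.comp (continuous_const.sub continuous_id)).clm_apply hf
  refine Integrable.mono' ((integrableOn_exp_neg_mul_sub_Iic hω t).const_mul (N * M))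
    hcont.aestronglyMeasurable ?_
  rw [ae_restrict_iff' measurableSet_Iic]
  exact .of_forall fun s hs => norm_kernel_apply_le hT hs (hfM s)

lemma norm_setIntegral_Iic_kernel_apply_le (hω : 0 < ω)
    (hT : ∀ τ, 0 ≤ τ → ‖T τ‖ ≤ N * Real.exp (-ω * τ)) {f : ℝ → E} {t K : ℝ}
    (hfK : ∀ s ≤ t, ‖f s‖ ≤ K) :
    ‖∫ s in Iic t, T (t - s) (f s)‖ ≤ N * K / ω := by
  refine (norm_integral_le_of_norm_le
    ((integrableOn_exp_neg_mul_sub_Iic hω t).const_mul (N * K)) ?_).trans_eq ?_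
  · rw [ae_restrict_iff' measurableSet_Iic]
    exact .of_forall fun s hs => norm_kernel_apply_le hT hs (hfK s hs)
  · rw [integral_const_mul, integral_exp_neg_mul_sub_Iic hω, div_eq_mul_inv]

lemma norm_setIntegral_Iic_kernel_apply_sub_le (hω : 0 < ω)
    (hT : ∀ τ, 0 ≤ τ → ‖T τ‖ ≤ N * Real.exp (-ω * τ)) (hTc : Continuous T) {f₁ f₂ : ℝ → E}
    (hf₁ : Continuous f₁) (hf₂ : Continuous f₂) {M : ℝ} (hf₁M : ∀ s, ‖f₁ s‖ ≤ M)
    (hf₂M : ∀ s, ‖f₂ s‖ ≤ M) {t K : ℝ} (hK : ∀ s ≤ t, ‖f₁ s - f₂ s‖ ≤ K) :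
    ‖(∫ s in Iic t, T (t - s) (f₁ s)) - ∫ s in Iic t, T (t - s) (f₂ s)‖ ≤ N * K / ω := by
  rw [← integral_sub (integrableOn_Iic_kernel_apply hω hT hTc hf₁ hf₁M t)
    (integrableOn_Iic_kernel_apply hω hT hTc hf₂ hf₂M t)]
  simp_rw [← map_sub]
  exact norm_setIntegral_Iic_kernel_apply_le hω hT hK

end DecayingKernel

section
attribute [local instance] Matrix.linftyOpNormedAddCommGroup Matrix.linftyOpNormedRing
  Matrix.linftyOpNormedAlgebra

lemma continuous_eAt {n : ℕ} (A : Matrix (Fin n) (Fin n) ℝ) : Continuous (eAt A) := by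
  have hφ : Continuous (Matrix.toEuclideanCLM (n := Fin n) (𝕜 := ℝ)) :=
    LinearMap.continuous_of_finiteDimensional
      (Matrix.toEuclideanCLM (n := Fin n) (𝕜 := ℝ)).toAlgEquiv.toLinearMap
  exact hφ.comp (NormedSpace.exp_continuous.comp (continuous_id.smul continuous_const))

end

lemma le_div_one_sub_of_forall_le {φ : ℝ → ℝ} {R a b : ℝ} (hb : b < 1)
    (hφ : BddAbove (φ '' Iic R))
    (h : ∀ D, (∀ s ≤ R, φ s ≤ D) → ∀ t ≤ R, φ t ≤ a + b * D) :
    ∀ t ≤ R, φ t ≤ a / (1 - b) := by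
  have hsup : ∀ s ≤ R, φ s ≤ sSup (φ '' Iic R) := fun s hs => le_csSup hφ ⟨s, hs, rfl⟩
  have hfix : sSup (φ '' Iic R) ≤ a + b * sSup (φ '' Iic R) :=
    csSup_le (nonempty_Iic.image φ) (by rintro _ ⟨t, ht, rfl⟩; exact h _ hsup t ht)
  intro t ht
  refine (hsup t ht).trans ?_
  rw [le_div_iff₀ (sub_pos.2 hb)]
  linarith

lemma tendsto_atBot_of_le_mul {φ ψ : ℝ → ℝ} {k : ℝ} (hφ : ∀ t, 0 ≤ φ t)
    (hψ : Tendsto ψ atBot (𝓝 0)) (h : ∀ R C, (∀ t ≤ R, ψ t ≤ C) → ∀ t ≤ R, φ t ≤ k * C) :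
    Tendsto φ atBot (𝓝 0) := by
  refine tendsto_order.2 ⟨fun a ha => .of_forall fun t => ha.trans_le (hφ t), fun a ha => ?_⟩
  have hC : 0 < a / (|k| + 1) := by positivity
  obtain ⟨R, hR⟩ := eventually_atBot.1 (hψ.eventually (ge_mem_nhds hC))
  filter_upwards [eventually_le_atBot R] with t ht
  calc φ t ≤ k * (a / (|k| + 1)) := h R _ hR t ht
    _ ≤ |k| * (a / (|k| + 1)) := by gcongr; exact le_abs_self k
    _ < a := by
        rw [← mul_div_assoc, div_lt_iff₀ (by positivity)]
        linarith

lemma norm_sub_le_of_lipschitz {α β γ : Type*} [SeminormedAddCommGroup α]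
    [SeminormedAddCommGroup β] [SeminormedAddCommGroup γ] {g : α → β → γ} {L₂ L₃ : ℝ}
    (hg₂ : ∀ x₁ x₂ y, ‖g x₁ y - g x₂ y‖ ≤ L₂ * ‖x₁ - x₂‖)
    (hg₃ : ∀ x y₁ y₂, ‖g x y₁ - g x y₂‖ ≤ L₃ * ‖y₁ - y₂‖) (x₁ x₂ : α) (y₁ y₂ : β) :
    ‖g x₁ y₁ - g x₂ y₂‖ ≤ L₂ * ‖x₁ - x₂‖ + L₃ * ‖y₁ - y₂‖ := by
  rw [← sub_add_sub_cancel _ (g x₂ y₁)]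
  exact (norm_add_le _ _).trans (add_le_add (hg₂ _ _ _) (hg₃ _ _ _))

lemma norm_sub_le_of_forall_norm_sub_le {m n : ℕ} {A : Matrix (Fin n) (Fin n) ℝ}
    {N ω M₀ L₂ L₃ : ℝ} (hω : 0 < ω) (hA : ∀ t : ℝ, 0 ≤ t → ‖eAt A t‖ ≤ N * Real.exp (-ω * t))
    {g : Eu m → Eu n → Eu n} (hgc : Continuous fun p : Eu m × Eu n => g p.1 p.2)
    (hgb : ∀ x y, ‖g x y‖ ≤ M₀) (hg₂ : ∀ x₁ x₂ y, ‖g x₁ y - g x₂ y‖ ≤ L₂ * ‖x₁ - x₂‖)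
    (hg₃ : ∀ x y₁ y₂, ‖g x y₁ - g x y₂‖ ≤ L₃ * ‖y₁ - y₂‖) (hL₂ : 0 ≤ L₂) (hL₃ : 0 ≤ L₃)
    (hcond : N * L₃ < ω) {x u : ℝ → Eu m} (hxc : Continuous x) (huc : Continuous u)
    {y yt : ℝ → Eu n} (hyc : Continuous y) (hytc : Continuous yt)
    (hyB : ∃ B, ∀ t, ‖y t‖ ≤ B) (hytB : ∃ B, ∀ t, ‖yt t‖ ≤ B)
    (hyint : ∀ t, y t = ∫ s in Iic t, eAt A (t - s) (g (x s) (y s)))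
    (hytint : ∀ t, yt t = ∫ s in Iic t, eAt A (t - s) (g (u s) (yt s)))
    {R C : ℝ} (hxu : ∀ t ≤ R, ‖x t - u t‖ ≤ C) :
    ∀ t ≤ R, ‖y t - yt t‖ ≤ N * L₂ / (ω - N * L₃) * C := by
  obtain ⟨By, hBy⟩ := hyB
  obtain ⟨Byt, hByt⟩ := hytB
  have hbdd : BddAbove ((fun t => ‖y t - yt t‖) '' Iic R) := by
    refine ⟨By + Byt, ?_⟩
    rintro _ ⟨s, -, rfl⟩
    exact (norm_sub_le _ _).trans (add_le_add (hBy s) (hByt s))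
  have hstep : ∀ D, (∀ s ≤ R, ‖y s - yt s‖ ≤ D) →
      ∀ t ≤ R, ‖y t - yt t‖ ≤ N * L₂ * C / ω + N * L₃ / ω * D := by
    intro D hD t ht
    rw [hyint t, hytint t]
    refine (norm_setIntegral_Iic_kernel_apply_sub_le hω hA (continuous_eAt A)
      (hgc.comp (hxc.prodMk hyc)) (hgc.comp (huc.prodMk hytc)) (fun _ => hgb _ _)
      (fun _ => hgb _ _) (K := L₂ * C + L₃ * D) fun s hs => ?_).trans_eq (by ring)
    exact (norm_sub_le_of_lipschitz hg₂ hg₃ _ _ _ _).trans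
      (add_le_add (mul_le_mul_of_nonneg_left (hxu s (hs.trans ht)) hL₂)
        (mul_le_mul_of_nonneg_left (hD s (hs.trans ht)) hL₃))
  have hb : N * L₃ / ω < 1 := (div_lt_one hω).2 hcond
  intro t ht
  refine (le_div_one_sub_of_forall_le hb hbdd hstep t ht).trans_eq ?_
  have : ω - N * L₃ ≠ 0 := (sub_pos.2 hcond).ne'
  field_simp

theorem stmt4_general {m n : ℕ} (A : Matrix (Fin n) (Fin n) ℝ) (N ω M₀ L₂ L₃ : ℝ)
    (hω : 0 < ω) (hL₂ : 0 < L₂) (hL₃ : 0 < L₃)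
    (hA : ∀ t : ℝ, 0 ≤ t → ‖eAt A t‖ ≤ N * Real.exp (-ω * t))
    (g : Eu m → Eu n → Eu n)
    (hgc : Continuous fun p : Eu m × Eu n => g p.1 p.2)
    (hgb : ∀ x y, ‖g x y‖ ≤ M₀)
    (hg₂ : ∀ x₁ x₂ y, ‖g x₁ y - g x₂ y‖ ≤ L₂ * ‖x₁ - x₂‖)
    (hg₃ : ∀ x y₁ y₂, ‖g x y₁ - g x y₂‖ ≤ L₃ * ‖y₁ - y₂‖)
    (hcond : N * L₃ - ω < 0)
    (x u : ℝ → Eu m) (hxc : Continuous x) (huc : Continuous u)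
    (hconv : Tendsto (fun t => ‖x t - u t‖) atBot (nhds 0))
    (y yt : ℝ → Eu n)
    (hyB : ∃ B, ∀ t, ‖y t‖ ≤ B) (hytB : ∃ B, ∀ t, ‖yt t‖ ≤ B)
    (hy : ∀ t, HasDerivAt y (mulA A (y t) + g (x t) (y t)) t)
    (hyint : ∀ t, y t = ∫ s in Iic t, eAt A (t - s) (g (x s) (y s)))
    (hyt : ∀ t, HasDerivAt yt (mulA A (yt t) + g (u t) (yt t)) t)
    (hytint : ∀ t, yt t = ∫ s in Iic t, eAt A (t - s) (g (u s) (yt s))) :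
    Tendsto (fun t => ‖y t - yt t‖) atBot (nhds 0) ∧
    ∀ β ε R : ℝ, 0 < β → 0 < ε →
      (∀ t ≤ R, ‖x t - u t‖ < β * ε) →
      ∀ t ≤ R, ‖y t - yt t‖ ≤ N * L₂ * β * ε / (ω - N * L₃) := by
  have hyc : Continuous y := continuous_iff_continuousAt.2 fun t => (hy t).continuousAt
  have hytc : Continuous yt := continuous_iff_continuousAt.2 fun t => (hyt t).continuousAt
  have key : ∀ R C, (∀ t ≤ R, ‖x t - u t‖ ≤ C) →
      ∀ t ≤ R, ‖y t - yt t‖ ≤ N * L₂ / (ω - N * L₃) * C := fun _ _ =>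
    norm_sub_le_of_forall_norm_sub_le hω hA hgc hgb hg₂ hg₃ hL₂.le hL₃.le (sub_neg.1 hcond)
      hxc huc hyc hytc hyB hytB hyint hytint
  refine ⟨tendsto_atBot_of_le_mul (fun t => norm_nonneg _) hconv key, ?_⟩
  intro β ε R _ _ hxu t ht
  calc ‖y t - yt t‖ ≤ N * L₂ / (ω - N * L₃) * (β * ε) := key R _ (fun s hs => (hxu s hs).le) t ht
    _ = N * L₂ * β * ε / (ω - N * L₃) := by ring

/-- Convergence as t → −∞ of the driving functions implies convergence of the
corresponding bounded solutions, with an explicit bound. -/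
theorem stmt4 {m n : ℕ} (A : Matrix (Fin n) (Fin n) ℝ) (N ω M₀ L₂ L₃ : ℝ)
    (hN : 0 < N) (hω : 0 < ω) (hL₂ : 0 < L₂) (hL₃ : 0 < L₃)
    (hA : ∀ t : ℝ, 0 ≤ t → ‖eAt A t‖ ≤ N * Real.exp (-ω * t))
    (g : Eu m → Eu n → Eu n)
    (hgc : Continuous fun p : Eu m × Eu n => g p.1 p.2)
    (hgb : ∀ x y, ‖g x y‖ ≤ M₀)
    (hg₂ : ∀ x₁ x₂ y, ‖g x₁ y - g x₂ y‖ ≤ L₂ * ‖x₁ - x₂‖)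
    (hg₃ : ∀ x y₁ y₂, ‖g x y₁ - g x y₂‖ ≤ L₃ * ‖y₁ - y₂‖)
    (hcond : N * L₃ - ω < 0)
    (x u : ℝ → Eu m) (hxc : Continuous x) (huc : Continuous u)
    (hxB : ∃ H, ∀ t, ‖x t‖ ≤ H) (huB : ∃ H, ∀ t, ‖u t‖ ≤ H)
    (hconv : Tendsto (fun t => ‖x t - u t‖) atBot (nhds 0))
    (y yt : ℝ → Eu n)
    (hyB : ∃ B, ∀ t, ‖y t‖ ≤ B) (hytB : ∃ B, ∀ t, ‖yt t‖ ≤ B)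
    (hy : ∀ t, HasDerivAt y (mulA A (y t) + g (x t) (y t)) t)
    (hyint : ∀ t, y t = ∫ s in Iic t, eAt A (t - s) (g (x s) (y s)))
    (hyt : ∀ t, HasDerivAt yt (mulA A (yt t) + g (u t) (yt t)) t)
    (hytint : ∀ t, yt t = ∫ s in Iic t, eAt A (t - s) (g (u s) (yt s))) :
    Tendsto (fun t => ‖y t - yt t‖) atBot (nhds 0) ∧
    ∀ β ε R : ℝ, 0 < β → 0 < ε →
      (∀ t ≤ R, ‖x t - u t‖ < β * ε) →
      ∀ t ≤ R, ‖y t - yt t‖ ≤ N * L₂ * β * ε / (ω - N * L₃) :=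
  stmt4_general A N ω M₀ L₂ L₃ hω hL₂ hL₃ hA g hgc hgb hg₂ hg₃ hcond x u hxc huc hconv y yt hyB hytB
    hy hyint hyt hytint
end

section
/- Under assumptions (A5) and (A7): suppose a periodic solution x_p ∈ 𝒜_x is stabilized in the sense that for a given solution x of x' = F(t,x) there exist a ∈ ℝ and E > 0 with ‖x(t) − x_p(t)‖ < ε for all t ∈ [a, a+E]. Let y be any solution of y' = Ay + g(x(t), y) and y_p = φ_{x_p} the bounded periodic solution corresponding to x_p. Then for all t ∈ [a, a+E], ‖y(t) − y_p(t)‖ < N‖y(a) − y_p(a)‖ e^{(N L₃ − ω)(t−a)} + N L₂ ε / (ω − N L₃). In particular, if E > (1/(ω − N L₃)) ln(N‖y(a) − y_p(a)‖/ε), then there exists b ∈ [a, a+E] such that ‖y(t) − y_p(t)‖ < (1 + N L₂/(ω − N L₃)) ε for all t ∈ [b, a+E]. -/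
/-! The difference `v = y - y_p` solves `v' = A v + G(t)` with `‖G‖ ≤ L₂ ε + L₃ ‖v‖` while `x` is
`ε`-close to `x_p`. Variation of constants together with `‖e^{tA}‖ ≤ N e^{-ωt}` bounds `‖v T‖` by
`Q T = N ‖v a‖ e^{-ω(T-a)} + ∫ₐᵀ e^{-ω(T-s)} (N L₂ ε + N L₃ ‖v s‖) ds`. Differentiating,
`Q' = -ω Q + N L₂ ε + N L₃ ‖v‖ ≤ (N L₃ - ω) Q + N L₂ ε`, so the differential Grönwall inequality
bounds `Q` by `gronwallBound`, which decays to `N L₂ ε / (ω - N L₃)` at the rate `ω - N L₃`. -/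

open MeasureTheory Set Filter

theorem le_gronwallBound_of_le_integral_exp {f : ℝ → ℝ} {α β K ω a b : ℝ}
    (hf : Continuous f) (hK : 0 ≤ K)
    (hle : ∀ T ∈ Icc a b, f T ≤ α * Real.exp (-ω * (T - a)) +
      ∫ s in a..T, Real.exp (-ω * (T - s)) * (β + K * f s)) :
    ∀ T ∈ Icc a b, f T ≤ gronwallBound α (K - ω) β (T - a) := by
  set h : ℝ → ℝ := fun s => β + K * f s
  set Q : ℝ → ℝ := fun T => α * Real.exp (-ω * (T - a)) +
    ∫ s in a..T, Real.exp (-ω * (T - s)) * h s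
  have hQ_eq : Q = fun T => Real.exp (-ω * (T - a)) *
      (α + ∫ s in a..T, Real.exp (ω * (s - a)) * h s) := by
    funext T
    simp only [Q]
    rw [mul_add, ← intervalIntegral.integral_const_mul, mul_comm α]
    congr 1
    refine intervalIntegral.integral_congr fun s _ => ?_
    simp only [← mul_assoc, ← Real.exp_add]
    ring_nf
  have hQ : ∀ T, HasDerivAt Q (-ω * Q T + h T) T := by
    intro T
    have hc : Continuous fun s => Real.exp (ω * (s - a)) * h s := by fun_prop
    have he : HasDerivAt (fun T => Real.exp (-ω * (T - a)))
        (Real.exp (-ω * (T - a)) * -ω) T := by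
      simpa using (((hasDerivAt_id T).sub_const a).const_mul (-ω)).exp
    have hI := intervalIntegral.integral_hasDerivAt_right (hc.intervalIntegrable a T)
      (hc.stronglyMeasurableAtFilter _ _) hc.continuousAt
    have hinv : Real.exp (-ω * (T - a)) * Real.exp (ω * (T - a)) = 1 := by
      rw [← Real.exp_add]; ring_nf; exact Real.exp_zero
    rw [hQ_eq]
    refine (he.mul (hI.const_add α)).congr_deriv ?_
    linear_combination h T * hinv
  intro T hT
  refine (hle T hT).trans ?_
  refine le_gronwallBound_of_liminf_deriv_right_le (f := Q)
    (fun x _ => (hQ x).continuousAt.continuousWithinAt)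
    (fun x _ r hr => (hQ x).hasDerivWithinAt.liminf_right_slope_le hr) (by simp [Q])
    (fun x hx => ?_) T hT
  have := mul_le_mul_of_nonneg_left (hle x (Ico_subset_Icc_self hx)) hK
  simp only [h]
  linarith

theorem nonneg_of_norm_exp_smul_le {E : Type*} [NormedAddCommGroup E] [NormedSpace ℝ E]
    {L : E →L[ℝ] E} {N ω : ℝ}
    (hL : ∀ t, 0 ≤ t → ‖NormedSpace.exp (t • L)‖ ≤ N * Real.exp (-ω * t)) : 0 ≤ N := by
  simpa using (norm_nonneg _).trans (hL 0 le_rfl)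

section VariationOfConstants

open NormedSpace

variable {E : Type*} [NormedAddCommGroup E] [NormedSpace ℝ E] [CompleteSpace E]
  {L : E →L[ℝ] E} {v G : ℝ → E} {N ω : ℝ}

theorem eq_exp_smul_apply_add_integral_of_hasDerivAt
    (hv : ∀ t, HasDerivAt v (L (v t) + G t) t) (hG : Continuous G) (a T : ℝ) :
    v T = exp ((T - a) • L) (v a) + ∫ s in a..T, exp ((T - s) • L) (G s) := by
  have hP : ∀ τ : ℝ, HasDerivAt (fun τ : ℝ => exp (τ • L)) (exp (τ • L) * L) τ :=
    hasDerivAt_exp_smul_const L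
  have hPc : Continuous fun τ : ℝ => exp (τ • L) :=
    continuous_iff_continuousAt.2 fun τ => (hP τ).continuousAt
  have hderiv : ∀ s ∈ uIcc a T, HasDerivAt (fun s => exp ((T - s) • L) (v s))
      (exp ((T - s) • L) (G s)) s := by
    intro s _
    have hc : HasDerivAt (fun s => exp ((T - s) • L))
        ((-1 : ℝ) • (exp ((T - s) • L) * L)) s :=
      (hP (T - s)).scomp s ((hasDerivAt_id s).const_sub T)
    convert hc.clm_apply (hv s) using 1
    simp
  have hcont : Continuous fun s => exp ((T - s) • L) (G s) :=
    (hPc.comp (continuous_const.sub continuous_id)).clm_apply hG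
  rw [intervalIntegral.integral_eq_sub_of_hasDerivAt hderiv (hcont.intervalIntegrable a T)]
  simp

theorem norm_le_mul_exp_add_integral_of_hasDerivAt {c d a T : ℝ}
    (hL : ∀ t, 0 ≤ t → ‖exp (t • L)‖ ≤ N * Real.exp (-ω * t))
    (hv : ∀ t, HasDerivAt v (L (v t) + G t) t) (hG : Continuous G) (haT : a ≤ T)
    (hGle : ∀ s ∈ Icc a T, ‖G s‖ ≤ c + d * ‖v s‖) :
    ‖v T‖ ≤ N * ‖v a‖ * Real.exp (-ω * (T - a)) +
      ∫ s in a..T, Real.exp (-ω * (T - s)) * (N * c + N * d * ‖v s‖) := by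
  have hN := nonneg_of_norm_exp_smul_le hL
  have hvc : Continuous v := continuous_iff_continuousAt.2 fun t => (hv t).continuousAt
  have hPc : Continuous fun τ : ℝ => exp (τ • L) :=
    continuous_iff_continuousAt.2 fun τ => (hasDerivAt_exp_smul_const L τ).continuousAt
  rw [eq_exp_smul_apply_add_integral_of_hasDerivAt hv hG a T]
  refine (norm_add_le _ _).trans (add_le_add ?_ ?_)
  · calc ‖exp ((T - a) • L) (v a)‖ ≤ ‖exp ((T - a) • L)‖ * ‖v a‖ :=
          ContinuousLinearMap.le_opNorm _ _
      _ ≤ N * Real.exp (-ω * (T - a)) * ‖v a‖ := by gcongr; exact hL _ (sub_nonneg.2 haT)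
      _ = _ := by ring
  refine (intervalIntegral.norm_integral_le_integral_norm haT).trans
    (intervalIntegral.integral_mono_on haT ?_ ?_ fun s hs => ?_)
  · exact ((hPc.comp (continuous_const.sub continuous_id)).clm_apply hG).norm.intervalIntegrable
      _ _
  · exact (by fun_prop : Continuous fun s =>
      Real.exp (-ω * (T - s)) * (N * c + N * d * ‖v s‖)).intervalIntegrable _ _
  calc ‖exp ((T - s) • L) (G s)‖ ≤ ‖exp ((T - s) • L)‖ * ‖G s‖ :=
        ContinuousLinearMap.le_opNorm _ _
    _ ≤ N * Real.exp (-ω * (T - s)) * (c + d * ‖v s‖) := by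
        gcongr
        · exact hL _ (sub_nonneg.2 hs.2)
        · exact hGle s hs
    _ = _ := by ring

theorem norm_sub_le_gronwallBound_of_hasDerivAt {X : Type*} [NormedAddCommGroup X]
    {g : X → E → E} {x xp : ℝ → X} {y yp : ℝ → E} {L₂ L₃ ε a b : ℝ}
    (hL : ∀ t, 0 ≤ t → ‖exp (t • L)‖ ≤ N * Real.exp (-ω * t))
    (hgc : Continuous fun p : X × E => g p.1 p.2)
    (hg₂ : ∀ x₁ x₂ y, ‖g x₁ y - g x₂ y‖ ≤ L₂ * ‖x₁ - x₂‖)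
    (hg₃ : ∀ x y₁ y₂, ‖g x y₁ - g x y₂‖ ≤ L₃ * ‖y₁ - y₂‖) (hL₂ : 0 ≤ L₂) (hL₃ : 0 ≤ L₃)
    (hx : Continuous x) (hxp : Continuous xp)
    (hy : ∀ t, HasDerivAt y (L (y t) + g (x t) (y t)) t)
    (hyp : ∀ t, HasDerivAt yp (L (yp t) + g (xp t) (yp t)) t)
    (hclose : ∀ s ∈ Icc a b, ‖x s - xp s‖ ≤ ε) :
    ∀ t ∈ Icc a b, ‖y t - yp t‖ ≤
      gronwallBound (N * ‖y a - yp a‖) (N * L₃ - ω) (N * (L₂ * ε)) (t - a) := by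
  set v : ℝ → E := fun t => y t - yp t
  set G : ℝ → E := fun t => g (x t) (y t) - g (xp t) (yp t)
  have hv : ∀ t, HasDerivAt v (L (v t) + G t) t := fun t => by
    refine ((hy t).sub (hyp t)).congr_deriv ?_
    simp only [v, G, map_sub]
    abel
  have hvc : Continuous v := continuous_iff_continuousAt.2 fun t => (hv t).continuousAt
  have hyc : Continuous y := continuous_iff_continuousAt.2 fun t => (hy t).continuousAt
  have hypc : Continuous yp := continuous_iff_continuousAt.2 fun t => (hyp t).continuousAt
  have hG : Continuous G := (hgc.comp (hx.prodMk hyc)).sub (hgc.comp (hxp.prodMk hypc))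
  have hGle : ∀ s ∈ Icc a b, ‖G s‖ ≤ L₂ * ε + L₃ * ‖v s‖ := fun s hs =>
    calc ‖G s‖ ≤ ‖g (x s) (y s) - g (xp s) (y s)‖ + ‖g (xp s) (y s) - g (xp s) (yp s)‖ :=
          norm_sub_le_norm_sub_add_norm_sub _ _ _
      _ ≤ L₂ * ‖x s - xp s‖ + L₃ * ‖v s‖ := add_le_add (hg₂ _ _ _) (hg₃ _ _ _)
      _ ≤ L₂ * ε + L₃ * ‖v s‖ := by gcongr; exact hclose s hs
  have hK : 0 ≤ N * L₃ := mul_nonneg (nonneg_of_norm_exp_smul_le hL) hL₃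
  exact le_gronwallBound_of_le_integral_exp hvc.norm hK fun t ht =>
    norm_le_mul_exp_add_integral_of_hasDerivAt hL hv hG ht.1
      fun s hs => hGle s ⟨hs.1, hs.2.trans ht.2⟩

end VariationOfConstants

theorem gronwallBound_lt_of_neg {δ K ε x : ℝ} (hK : K < 0) (hε : 0 < ε) :
    gronwallBound δ K ε x < δ * Real.exp (K * x) + ε / -K := by
  have hneg : ε / K * Real.exp (K * x) < 0 :=
    mul_neg_of_neg_of_pos (div_neg_of_pos_of_neg hε hK) (Real.exp_pos _)
  rw [gronwallBound_of_K_ne_0 hK.ne, div_neg]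
  beta_reduce
  linarith

theorem exists_forall_mul_exp_le {c D ε a E : ℝ} (hc : c < 0) (hD : 0 ≤ D) (hε : 0 < ε)
    (hE : 0 ≤ E) (hlog : 1 / -c * Real.log (D / ε) < E) :
    ∃ b ∈ Icc a (a + E), ∀ t, b ≤ t → D * Real.exp (c * (t - a)) ≤ ε := by
  set r := max 0 (1 / -c * Real.log (D / ε))
  refine ⟨a + r, ⟨by simp [r], by simpa [r] using max_le hE hlog.le⟩, fun t ht => ?_⟩
  rcases hD.eq_or_lt with rfl | hD
  · simpa using hε.le
  have hlog_le : Real.log (D / ε) ≤ -c * (t - a) := by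
    have : 1 / -c * Real.log (D / ε) ≤ t - a := (le_max_right _ _).trans (le_sub_iff_add_le'.2 ht)
    rwa [one_div, inv_mul_le_iff₀ (neg_pos.2 hc)] at this
  calc D * Real.exp (c * (t - a)) ≤ D * Real.exp (-Real.log (D / ε)) := by
        gcongr
        linarith
    _ = ε := by
        rw [Real.exp_neg, Real.exp_log (by positivity), inv_div]
        field_simp

open NormedSpace in
theorem eAt_eq_exp_smul_mulA {n : ℕ} (A : Matrix (Fin n) (Fin n) ℝ) (t : ℝ) :
    eAt A t = exp (t • mulA A) := by
  -- `map_exp_of_mem_ball` needs a Banach-algebra norm on matrices; all norms give one topology.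
  let : NormedRing (Matrix (Fin n) (Fin n) ℝ) := Matrix.linftyOpNormedRing
  let : NormedAlgebra ℝ (Matrix (Fin n) (Fin n) ℝ) := Matrix.linftyOpNormedAlgebra
  have hcont : Continuous (Matrix.toEuclideanCLM (𝕜 := ℝ) (n := Fin n)) :=
    LinearMap.continuous_of_finiteDimensional
      (Matrix.toEuclideanCLM (𝕜 := ℝ) (n := Fin n)).toAlgEquiv.toLinearEquiv.toLinearMap
  rw [eAt, mulA, ← map_smul]
  exact map_exp_of_mem_ball (𝕂 := ℝ) _ hcont _
    ((expSeries_radius_eq_top ℝ (Matrix (Fin n) (Fin n) ℝ)).symm ▸ edist_lt_top _ _)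

theorem stmt16_general {m n : ℕ} (A : Matrix (Fin n) (Fin n) ℝ) (N ω L₂ L₃ ε a E : ℝ)
    (hN : 0 < N) (hL₂ : 0 < L₂) (hL₃ : 0 < L₃)
    (hε : 0 < ε) (hE : 0 < E)
    (hA : ∀ t : ℝ, 0 ≤ t → ‖eAt A t‖ ≤ N * Real.exp (-ω * t))
    (g : Eu m → Eu n → Eu n)
    (hgc : Continuous fun p : Eu m × Eu n => g p.1 p.2)
    (hg₂ : ∀ x₁ x₂ y, ‖g x₁ y - g x₂ y‖ ≤ L₂ * ‖x₁ - x₂‖)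
    (hg₃ : ∀ x y₁ y₂, ‖g x y₁ - g x y₂‖ ≤ L₃ * ‖y₁ - y₂‖)
    (hcond : N * L₃ - ω < 0)
    (F : ℝ → Eu m → Eu m)
    (x xp : ℝ → Eu m)
    (hx : ∀ t, HasDerivAt x (F t (x t)) t)
    (hxp : ∀ t, HasDerivAt xp (F t (xp t)) t)
    (hclose : ∀ t ∈ Icc a (a + E), ‖x t - xp t‖ < ε)
    (y yp : ℝ → Eu n)
    (hy : ∀ t, HasDerivAt y (mulA A (y t) + g (x t) (y t)) t)
    (hyp : ∀ t, HasDerivAt yp (mulA A (yp t) + g (xp t) (yp t)) t) :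
    (∀ t ∈ Icc a (a + E), ‖y t - yp t‖ <
      N * ‖y a - yp a‖ * Real.exp ((N * L₃ - ω) * (t - a)) +
        N * L₂ * ε / (ω - N * L₃)) ∧
    ((1 / (ω - N * L₃)) * Real.log (N * ‖y a - yp a‖ / ε) < E →
      ∃ b ∈ Icc a (a + E), ∀ t ∈ Icc b (a + E),
        ‖y t - yp t‖ < (1 + N * L₂ / (ω - N * L₃)) * ε) := by
  have hcont : ∀ {z : ℝ → Eu m} {f : ℝ → Eu m}, (∀ t, HasDerivAt z (f t) t) → Continuous z :=
    fun hz => continuous_iff_continuousAt.2 fun t => (hz t).continuousAt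
  have hbound := norm_sub_le_gronwallBound_of_hasDerivAt
    (fun t ht => eAt_eq_exp_smul_mulA A t ▸ hA t ht) hgc hg₂ hg₃ hL₂.le hL₃.le
    (hcont hx) (hcont hxp) hy hyp fun s hs => (hclose s hs).le
  have hdist : ∀ t ∈ Icc a (a + E), ‖y t - yp t‖ <
      N * ‖y a - yp a‖ * Real.exp ((N * L₃ - ω) * (t - a)) + N * L₂ * ε / (ω - N * L₃) := by
    intro t ht
    have := (hbound t ht).trans_lt (gronwallBound_lt_of_neg hcond (by positivity))
    rwa [neg_sub, ← mul_assoc] at this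
  refine ⟨hdist, fun hlog => ?_⟩
  rw [← neg_sub (N * L₃)] at hlog
  obtain ⟨b, hb, hdecay⟩ := exists_forall_mul_exp_le hcond (by positivity) hε hE.le hlog
  refine ⟨b, hb, fun t ht => ?_⟩
  have h1 := hdist t ⟨hb.1.trans ht.1, ht.2⟩
  have h2 := hdecay t ht.1
  have h3 : N * L₂ * ε / (ω - N * L₃) = N * L₂ / (ω - N * L₃) * ε := by ring
  linarith

/-- Control of the replicator: if the generator solution x stays ε-close to the
periodic solution x_p on [a, a+E], then y stays close to y_p = φ\_{x_p}. -/
theorem stmt16 {m n : ℕ} (A : Matrix (Fin n) (Fin n) ℝ) (N ω L₂ L₃ ε a E : ℝ)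
    (hN : 0 < N) (hω : 0 < ω) (hL₂ : 0 < L₂) (hL₃ : 0 < L₃)
    (hε : 0 < ε) (hE : 0 < E)
    (hA : ∀ t : ℝ, 0 ≤ t → ‖eAt A t‖ ≤ N * Real.exp (-ω * t))
    (g : Eu m → Eu n → Eu n)
    (hgc : Continuous fun p : Eu m × Eu n => g p.1 p.2)
    (hg₂ : ∀ x₁ x₂ y, ‖g x₁ y - g x₂ y‖ ≤ L₂ * ‖x₁ - x₂‖)
    (hg₃ : ∀ x y₁ y₂, ‖g x y₁ - g x y₂‖ ≤ L₃ * ‖y₁ - y₂‖)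
    (hcond : N * L₃ - ω < 0)
    (F : ℝ → Eu m → Eu m)
    (x xp : ℝ → Eu m)
    (hx : ∀ t, HasDerivAt x (F t (x t)) t)
    (hxp : ∀ t, HasDerivAt xp (F t (xp t)) t)
    (hxpper : ∃ p > (0:ℝ), ∀ t, xp (t + p) = xp t)
    (hclose : ∀ t ∈ Icc a (a + E), ‖x t - xp t‖ < ε)
    (y yp : ℝ → Eu n)
    (hy : ∀ t, HasDerivAt y (mulA A (y t) + g (x t) (y t)) t)
    (hypB : ∃ B, ∀ t, ‖yp t‖ ≤ B)
    (hyp : ∀ t, HasDerivAt yp (mulA A (yp t) + g (xp t) (yp t)) t) :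
    (∀ t ∈ Icc a (a + E), ‖y t - yp t‖ <
      N * ‖y a - yp a‖ * Real.exp ((N * L₃ - ω) * (t - a)) +
        N * L₂ * ε / (ω - N * L₃)) ∧
    ((1 / (ω - N * L₃)) * Real.log (N * ‖y a - yp a‖ / ε) < E →
      ∃ b ∈ Icc a (a + E), ∀ t ∈ Icc b (a + E),
        ‖y t - yp t‖ < (1 + N * L₂ / (ω - N * L₃)) * ε) :=
  stmt16_general A N ω L₂ L₃ ε a E hN hL₂ hL₃ hε hE hA g hgc hg₂ hg₃ hcond F x xp hx hxp hclose y yp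
    hy hyp
end
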